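/- Suppose f_1,…,f_n : [0,1] → [0,1] are continuous, T_P(t) = (f_1(t),…,f_n(t)) is injective, and the range of T_P is contained in L = ⋃_{i=1}^{n−1} conv{e_i, e_{i+1}}, where the range contains both e_1 and e_n. Then the range of T_P equals L. -/

import Mathlib

/-!
The linear functional `x ↦ ∑ j, j * x j` sends the point `(1 - t) e_i + t e_{i+1}` of `L` to
`i + t`, and that point is recovered from its weight `r` as `(max 0 (1 - |j - r|))_j`; so the
weight is injective on `L` and maps it into `[0, n - 1]`. The range of `T_P` is connected and
contains `e_1` and `e_n`, whose weights are `0` and `n - 1`, so its weights fill `[0, n - 1]`,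
and by injectivity it is all of `L`.
-/

open Set

lemma max_zero_one_sub_abs_natCast_sub (k m : ℕ) {t : ℝ} (ht0 : 0 ≤ t) (ht1 : t ≤ 1) :
    max 0 (1 - |(k : ℝ) - (m + t)|) =
      (if k = m then 1 - t else 0) + (if k = m + 1 then t else 0) := by
  obtain hk | rfl | rfl | hk : k + 1 ≤ m ∨ k = m ∨ k = m + 1 ∨ m + 2 ≤ k := by omega
  · have : (k : ℝ) + 1 ≤ m := by exact_mod_cast hk
    rw [if_neg (by omega), if_neg (by omega), abs_of_neg (by linarith), max_eq_left (by linarith)]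
    simp
  · rw [if_pos rfl, if_neg (by omega), abs_of_nonpos (by linarith), max_eq_right (by linarith)]
    ring
  · rw [if_neg (by omega), if_pos rfl]
    push_cast
    rw [abs_of_nonneg (by linarith), max_eq_right (by linarith)]
    ring
  · have : (m : ℝ) + 2 ≤ k := by exact_mod_cast hk
    rw [if_neg (by omega), if_neg (by omega), abs_of_pos (by linarith), max_eq_left (by linarith)]
    simp

lemma IsPreconnected.eq_of_injOn_of_mapsTo_Icc {X : Type*} [TopologicalSpace X] {K L : Set X}
    {ψ : X → ℝ} {a b : ℝ} (hK : IsPreconnected K) (hψ : ContinuousOn ψ K) (hKL : K ⊆ L)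
    (hinj : InjOn ψ L) (hmaps : MapsTo ψ L (Icc a b)) (ha : a ∈ ψ '' K) (hb : b ∈ ψ '' K) :
    K = L := by
  refine hKL.antisymm fun x hx => ?_
  obtain ⟨y, hyK, hyx⟩ := (hK.image ψ hψ).Icc_subset ha hb (hmaps hx)
  rwa [← hinj (hKL hyK) hx hyx]

section BasisChain

def basisChain (n : ℕ) : Set (EuclideanSpace ℝ (Fin n)) :=
  ⋃ i : Fin n, ⋃ hi : (i : ℕ) + 1 < n,
    segment ℝ (EuclideanSpace.single i 1) (EuclideanSpace.single (⟨(i : ℕ) + 1, hi⟩ : Fin n) 1)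

noncomputable def chainWeight (n : ℕ) : EuclideanSpace ℝ (Fin n) →L[ℝ] ℝ :=
  innerSL ℝ (WithLp.toLp 2 fun j : Fin n => (j : ℝ))

noncomputable def chainPoint (n : ℕ) (r : ℝ) : EuclideanSpace ℝ (Fin n) :=
  WithLp.toLp 2 fun j => max 0 (1 - |(j : ℝ) - r|)

variable {n : ℕ}

lemma mem_basisChain {x : EuclideanSpace ℝ (Fin n)} :
    x ∈ basisChain n ↔ ∃ (i : Fin n) (hi : (i : ℕ) + 1 < n), ∃ t ∈ Icc (0 : ℝ) 1,
      (1 - t) • EuclideanSpace.single i 1 +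
        t • EuclideanSpace.single (⟨(i : ℕ) + 1, hi⟩ : Fin n) 1 = x := by
  simp only [basisChain, mem_iUnion, segment_eq_image, mem_image]

lemma chainWeight_single (i : Fin n) : chainWeight n (EuclideanSpace.single i 1) = i := by
  simp [chainWeight, EuclideanSpace.inner_single_right]

lemma chainWeight_edge (i : Fin n) (hi : (i : ℕ) + 1 < n) (t : ℝ) :
    chainWeight n ((1 - t) • EuclideanSpace.single i 1 +
      t • EuclideanSpace.single (⟨(i : ℕ) + 1, hi⟩ : Fin n) 1) = i + t := by
  simp only [map_add, map_smul, chainWeight_single, smul_eq_mul]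
  push_cast
  ring

lemma chainPoint_edge (i : Fin n) (hi : (i : ℕ) + 1 < n) {t : ℝ} (ht : t ∈ Icc (0 : ℝ) 1) :
    chainPoint n (i + t) = (1 - t) • EuclideanSpace.single i 1 +
      t • EuclideanSpace.single (⟨(i : ℕ) + 1, hi⟩ : Fin n) 1 := by
  ext j
  simp only [chainPoint, PiLp.add_apply, PiLp.smul_apply, PiLp.single_apply, smul_eq_mul,
    mul_ite, mul_one, mul_zero, Fin.ext_iff]
  exact max_zero_one_sub_abs_natCast_sub j i ht.1 ht.2

lemma leftInvOn_chainPoint_chainWeight :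
    LeftInvOn (chainPoint n) (chainWeight n) (basisChain n) := by
  intro x hx
  obtain ⟨i, hi, t, ht, rfl⟩ := mem_basisChain.1 hx
  rw [chainWeight_edge, chainPoint_edge i hi ht]

lemma mapsTo_chainWeight_basisChain :
    MapsTo (chainWeight n) (basisChain n) (Icc 0 ((n - 1 : ℕ) : ℝ)) := by
  intro x hx
  obtain ⟨i, hi, t, ⟨ht0, ht1⟩, rfl⟩ := mem_basisChain.1 hx
  have : (i : ℝ) + 1 ≤ ((n - 1 : ℕ) : ℝ) := by exact_mod_cast (by omega : (i : ℕ) + 1 ≤ n - 1)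
  rw [chainWeight_edge]
  constructor <;> [positivity; linarith]

end BasisChain

/-- If `T_P` is injective, continuous, its range is contained in the path
`L = ⋃_{i=1}^{n−1} conv{e_i, e_{i+1}}`, and the range contains both endpoints
`e_1` and `e_n`, then the range of `T_P` equals `L`. -/
theorem stmt18 (n : ℕ) (hn : 2 ≤ n) (f : Fin n → ℝ → ℝ)
    (hcont : ∀ i, ContinuousOn (f i) (Set.Icc 0 1))
    (L : Set (EuclideanSpace ℝ (Fin n)))
    (hL : L = ⋃ i : Fin n, ⋃ hi : (i : ℕ) + 1 < n,
      segment ℝ (EuclideanSpace.single i 1)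
        (EuclideanSpace.single (⟨(i : ℕ) + 1, hi⟩ : Fin n) 1))
    (hsub : (fun x => (WithLp.toLp 2 (fun i => f i x) : EuclideanSpace ℝ (Fin n))) ''
      (Set.Icc 0 1) ⊆ L)
    (he1 : EuclideanSpace.single (⟨0, by omega⟩ : Fin n) 1 ∈
      (fun x => (WithLp.toLp 2 (fun i => f i x) : EuclideanSpace ℝ (Fin n))) '' (Set.Icc 0 1))
    (hen : EuclideanSpace.single (⟨n - 1, by omega⟩ : Fin n) 1 ∈
      (fun x => (WithLp.toLp 2 (fun i => f i x) : EuclideanSpace ℝ (Fin n))) '' (Set.Icc 0 1)) :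
    (fun x => (WithLp.toLp 2 (fun i => f i x) : EuclideanSpace ℝ (Fin n))) '' (Set.Icc 0 1) = L := by
  have hT : ContinuousOn (fun x => (WithLp.toLp 2 (fun i => f i x) : EuclideanSpace ℝ (Fin n)))
      (Icc 0 1) := (PiLp.continuous_toLp 2 _).comp_continuousOn (continuousOn_pi.2 hcont)
  obtain rfl : L = basisChain n := hL
  refine (isPreconnected_Icc.image _ hT).eq_of_injOn_of_mapsTo_Icc
    (chainWeight n).continuous.continuousOn hsub leftInvOn_chainPoint_chainWeight.injOn
    mapsTo_chainWeight_basisChain ⟨_, he1, ?_⟩ ⟨_, hen, chainWeight_single _⟩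
  simpa using chainWeight_single (⟨0, by omega⟩ : Fin n)
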